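/- arXiv:1103.4334 — 14 statements merged into one kernel-verified Lean document; each statement's English description precedes it below -/
import Mathlib

section
/- Let α and β be finite types with decidable equality and let A : Matrix (α ⊕ β) (α ⊕ β) (ZMod 2) be symmetric (Aᵀ = A), with blocks P = A.toBlocks₁₁ and Q = A.toBlocks₁₂. Let W be the span over ZMod 2 of the standard basis vectors indexed by Sum.inl a (a : α) inside the space (α ⊕ β) → ZMod 2, and let W' be the 𝓔-annihilator of W, i.e. the submodule of vectors v such that (A.mulVec v) (Sum.inl a) = 0 for all a : α. Then W ⊔ W' = ⊤ (W and its annihilator span the whole space) if and only if there exists a matrix M : Matrix α β (ZMod 2) with Q = P * M. -/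
open Matrix

/-! `W` is the kernel of the surjective restriction map `v ↦ v ∘ Sum.inr`, so `W ⊔ W' = ⊤` exactly
when every `y : β → 𝔽₂` extends to a vector of `W'`, i.e. when `P x + Q y = 0` is solvable in `x`
for every `y`. This says that every column of `Q` lies in the column space of `P`. -/

open Function Submodule LinearMap

theorem Submodule.ker_sup_eq_top_iff_map_eq_top {R M N : Type*} [Ring R] [AddCommGroup M]
    [AddCommGroup N] [Module R M] [Module R N] {f : M →ₗ[R] N} (hf : Surjective f)
    (p : Submodule R M) : ker f ⊔ p = ⊤ ↔ p.map f = ⊤ := by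
  rw [← codisjoint_iff, codisjoint_comm, ← map_eq_range_iff, range_eq_top.2 hf]

section

variable {R l m n : Type*}

theorem span_range_single_inl_eq_ker_funLeft_inr [Semiring R] [Fintype m] [Fintype n]
    [DecidableEq m] [DecidableEq n] :
    span R (Set.range fun a : m => (Pi.single (Sum.inl a) 1 : m ⊕ n → R)) =
      ker (funLeft R R (Sum.inr : n → m ⊕ n)) := by
  refine le_antisymm (span_le.2 ?_) fun v hv => ?_
  · rintro _ ⟨a, rfl⟩
    ext b
    simp
  · have hv : ∀ b, v (Sum.inr b) = 0 := congrFun hv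
    rw [pi_eq_sum_univ' v, Fintype.sum_sum_type]
    simp only [hv, zero_smul, Finset.sum_const_zero, add_zero]
    exact sum_mem fun a _ => smul_mem _ _ (subset_span ⟨a, rfl⟩)

theorem map_funLeft_inr_eq_top_iff [Semiring R] (p : Submodule R (m ⊕ n → R)) :
    p.map (funLeft R R Sum.inr) = ⊤ ↔ ∀ y : n → R, ∃ x : m → R, Sum.elim x y ∈ p := by
  simp only [eq_top_iff', mem_map]
  refine forall_congr' fun y => ⟨?_, fun ⟨x, hx⟩ => ⟨_, hx, rfl⟩⟩
  rintro ⟨v, hv, rfl⟩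
  exact ⟨v ∘ Sum.inl, by rwa [← Sum.elim_comp_inl_inr v] at hv⟩

theorem sum_elim_mem_iInf_ker_proj_inl_comp_mulVecLin {l' : Type*} [CommSemiring R]
    [Fintype m] [Fintype n]
    (A : Matrix (l ⊕ l') (m ⊕ n) R) (x : m → R) (y : n → R) :
    Sum.elim x y ∈ ⨅ a : l, ker ((proj (Sum.inl a) : (l ⊕ l' → R) →ₗ[R] R) ∘ₗ A.mulVecLin) ↔
      A.toBlocks₁₁ *ᵥ x + A.toBlocks₁₂ *ᵥ y = 0 := by
  conv_lhs => rw [← fromBlocks_toBlocks A]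
  simp [funext_iff, fromBlocks_mulVec]

theorem Matrix.exists_eq_mul_iff_forall_exists_mulVec_eq [CommSemiring R] [Fintype m]
    [Fintype n] [DecidableEq n] (P : Matrix l m R) (Q : Matrix l n R) :
    (∃ M : Matrix m n R, Q = P * M) ↔ ∀ y, ∃ x, P *ᵥ x = Q *ᵥ y := by
  refine ⟨fun ⟨M, hM⟩ y => ⟨M *ᵥ y, by rw [hM, mulVec_mulVec]⟩, fun h => ?_⟩
  choose x hx using h
  refine ⟨of fun a b => x (Pi.single b 1) a, ?_⟩
  refine Matrix.ext fun i b => ?_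
  have hcol := congrFun (hx (Pi.single b 1)) i
  rw [mulVec_single_one] at hcol
  simpa [mul_apply, mulVec, dotProduct] using hcol.symm

end

theorem stmt_0_general {α β : Type*} [Fintype α] [DecidableEq α] [Fintype β] [DecidableEq β]
    (A : Matrix (α ⊕ β) (α ⊕ β) (ZMod 2)) :
    (Submodule.span (ZMod 2)
        (Set.range fun a : α => (Pi.single (Sum.inl a) 1 : (α ⊕ β) → ZMod 2)) ⊔
      (⨅ a : α, LinearMap.ker
        ((LinearMap.proj (Sum.inl a) : ((α ⊕ β) → ZMod 2) →ₗ[ZMod 2] ZMod 2).comp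
          A.mulVecLin)) = ⊤) ↔
    ∃ M : Matrix α β (ZMod 2), A.toBlocks₁₂ = A.toBlocks₁₁ * M := by
  rw [span_range_single_inl_eq_ker_funLeft_inr,
    ker_sup_eq_top_iff_map_eq_top (funLeft_surjective_of_injective _ _ _ Sum.inr_injective),
    map_funLeft_inr_eq_top_iff, exists_eq_mul_iff_forall_exists_mulVec_eq]
  simp only [sum_elim_mem_iInf_ker_proj_inl_comp_mulVecLin]
  refine forall_congr' fun y => ⟨fun ⟨x, hx⟩ => ⟨-x, ?_⟩, fun ⟨x, hx⟩ => ⟨-x, ?_⟩⟩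
  · rw [mulVec_neg, neg_eq_of_add_eq_zero_right hx]
  · rw [mulVec_neg, hx, neg_add_cancel]

/-- For a symmetric matrix `A` over `𝔽₂` indexed by `α ⊕ β`, the span `W` of the
standard basis vectors indexed by `Sum.inl a` together with its `𝓔`-annihilator
`W' = {v | ∀ a, (A.mulVec v) (Sum.inl a) = 0}` spans the whole space if and only if
there is a matrix `M` with `A.toBlocks₁₂ = A.toBlocks₁₁ * M`. -/
theorem stmt_0 {α β : Type*} [Fintype α] [DecidableEq α] [Fintype β] [DecidableEq β]
    (A : Matrix (α ⊕ β) (α ⊕ β) (ZMod 2)) (hA : Aᵀ = A) :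
    (Submodule.span (ZMod 2)
        (Set.range fun a : α => (Pi.single (Sum.inl a) 1 : (α ⊕ β) → ZMod 2)) ⊔
      (⨅ a : α, LinearMap.ker
        ((LinearMap.proj (Sum.inl a) : ((α ⊕ β) → ZMod 2) →ₗ[ZMod 2] ZMod 2).comp
          A.mulVecLin)) = ⊤) ↔
    ∃ M : Matrix α β (ZMod 2), A.toBlocks₁₂ = A.toBlocks₁₁ * M :=
  stmt_0_general A
end

section
/- Let α and β be finite types with decidable equality, let A = Matrix.fromBlocks P Q Qᵀ R : Matrix (α ⊕ β) (α ⊕ β) (ZMod 2) be symmetric, and suppose M : Matrix α β (ZMod 2) satisfies Q = P * M. Set B := R - Mᵀ * P * M. Then for all finsets W₁, W₂ ⊆ β, the rank of the submatrix of A with rows indexed by α ⊕ ↥W₁ (via Sum.map id Subtype.val) and columns indexed by α ⊕ ↥W₂ (via Sum.map id Subtype.val) equals P.rank plus the rank of the submatrix of B with rows ↥W₁ and columns ↥W₂ (via Subtype.val). In other words, rank_{Γ_α(A)}(W₁, W₂) = rank_A(α ∪ W₁, α ∪ W₂) − rank_A(α). -/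
open Matrix

section Aux

variable {K : Type*} [Field K]

/-- The submodule product is linearly equivalent to the product of submodules. -/
def submoduleProdEquivAux {M N : Type*} [AddCommGroup M] [AddCommGroup N]
    [Module K M] [Module K N] (p : Submodule K M) (q : Submodule K N) :
    (p.prod q) ≃ₗ[K] p × q where
  toFun x := (⟨x.1.1, x.2.1⟩, ⟨x.1.2, x.2.2⟩)
  invFun x := ⟨(x.1.1, x.2.1), x.1.2, x.2.2⟩
  map_add' _ _ := rfl
  map_smul' _ _ := rfl
  left_inv _ := rfl
  right_inv _ := rfl

lemma range_prodMap_aux {M N M' N' : Type*} [AddCommGroup M] [AddCommGroup N]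
    [AddCommGroup M'] [AddCommGroup N'] [Module K M] [Module K N] [Module K M'] [Module K N']
    (f : M →ₗ[K] M') (g : N →ₗ[K] N') :
    LinearMap.range (f.prodMap g) =
      (LinearMap.range f).prod (LinearMap.range g) := by
  ext ⟨a, b⟩
  constructor
  · rintro ⟨⟨u, v⟩, h⟩
    exact ⟨⟨u, (Prod.ext_iff.mp h).1⟩, ⟨v, (Prod.ext_iff.mp h).2⟩⟩
  · rintro ⟨⟨u, hu⟩, ⟨v, hv⟩⟩
    exact ⟨(u, v), by simp [LinearMap.prodMap_apply, hu, hv]⟩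

lemma rank_fromBlocks_diag {α β α' β' : Type*} [Fintype α] [Fintype β]
    [Fintype α'] [Fintype β'] (A : Matrix α' α K) (D : Matrix β' β K) :
    (Matrix.fromBlocks A 0 0 D).rank = A.rank + D.rank := by
  classical
  set e₁ := LinearEquiv.sumArrowLequivProdArrow α β K K with he₁
  set e₂ := LinearEquiv.sumArrowLequivProdArrow α' β' K K with he₂
  have hv : ∀ x : α ⊕ β → K, (Matrix.fromBlocks A 0 0 D).mulVec x =
      Sum.elim (A.mulVec (x ∘ Sum.inl)) (D.mulVec (x ∘ Sum.inr)) := by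
    intro x
    have hx : x = Sum.elim (x ∘ Sum.inl) (x ∘ Sum.inr) := by
      funext j; cases j <;> rfl
    conv_lhs => rw [hx]
    rw [Matrix.fromBlocks_mulVec]
    simp [Matrix.zero_mulVec]
  have hcomp : (Matrix.fromBlocks A 0 0 D).mulVecLin =
      (e₂.symm.toLinearMap ∘ₗ (A.mulVecLin.prodMap D.mulVecLin)) ∘ₗ e₁.toLinearMap := by
    apply LinearMap.ext
    intro x
    simp only [LinearMap.coe_comp, Function.comp_apply, LinearEquiv.coe_coe,
      LinearMap.prodMap_apply, Matrix.mulVecLin_apply]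
    rw [hv x]
    rfl
  rw [Matrix.rank, hcomp]
  rw [LinearMap.range_comp_of_range_eq_top _ (LinearMap.range_eq_top.mpr e₁.surjective)]
  rw [LinearMap.range_comp]
  rw [LinearEquiv.finrank_map_eq]
  rw [range_prodMap_aux]
  rw [(submoduleProdEquivAux _ _).finrank_eq, Module.finrank_prod]
  rfl

end Aux

/-- rank formula for graph reductions:
`rank_{Γ_α(A)}(W₁, W₂) = rank_A(α ∪ W₁, α ∪ W₂) − rank_A(α)`. -/
theorem stmt_2 {α β : Type*} [Fintype α] [DecidableEq α] [Fintype β] [DecidableEq β]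
    (P : Matrix α α (ZMod 2)) (Q : Matrix α β (ZMod 2)) (R : Matrix β β (ZMod 2))
    (hA : (Matrix.fromBlocks P Q Qᵀ R)ᵀ = Matrix.fromBlocks P Q Qᵀ R)
    (M : Matrix α β (ZMod 2)) (hM : Q = P * M)
    (W₁ W₂ : Finset β) :
    ((Matrix.fromBlocks P Q Qᵀ R).submatrix
        (Sum.map id (Subtype.val : ↥W₁ → β)) (Sum.map id (Subtype.val : ↥W₂ → β))).rank =
      P.rank +
        ((R - Mᵀ * P * M).submatrix (Subtype.val : ↥W₁ → β) (Subtype.val : ↥W₂ → β)).rank := by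
  classical
  set v₁ : ↥W₁ → β := Subtype.val
  set v₂ : ↥W₂ → β := Subtype.val
  have hP : Pᵀ = P := by
    ext i j
    have := congrFun (congrFun hA (Sum.inl i)) (Sum.inl j)
    simpa using this
  set M₁ : Matrix α ↥W₁ (ZMod 2) := M.submatrix id v₁ with hM₁
  set M₂ : Matrix α ↥W₂ (ZMod 2) := M.submatrix id v₂ with hM₂
  have hQ₂ : Q.submatrix id v₂ = P * M₂ := by
    rw [hM]
    ext i j
    simp [hM₂, Matrix.mul_apply]
  have hQ₁ : Qᵀ.submatrix v₁ id = M₁ᵀ * P := by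
    rw [hM]
    ext i j
    simp only [Matrix.submatrix_apply, Matrix.transpose_apply, Matrix.mul_apply, hM₁, id_eq]
    refine Finset.sum_congr rfl fun k _ => ?_
    rw [mul_comm]
    congr 1
    exact (congrFun (congrFun hP j) k).symm
  -- the submatrix as a block matrix
  have hsub : (Matrix.fromBlocks P Q Qᵀ R).submatrix
        (Sum.map id v₁) (Sum.map id v₂) =
      Matrix.fromBlocks P (P * M₂) (M₁ᵀ * P) (R.submatrix v₁ v₂) := by
    ext i j
    rcases i with i | i <;> rcases j with j | j <;>
      simp [← hQ₂, ← hQ₁, Matrix.submatrix_apply]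
  set B' : Matrix ↥W₁ ↥W₂ (ZMod 2) :=
    (R - Mᵀ * P * M).submatrix v₁ v₂ with hB'def
  have hMPM : (Mᵀ * P * M).submatrix v₁ v₂ = M₁ᵀ * P * M₂ := by
    ext i j
    simp [Matrix.mul_apply, hM₁, hM₂, Finset.sum_mul]
  have hB' : B' = R.submatrix v₁ v₂ - M₁ᵀ * P * M₂ := by
    ext i j
    simp [hB'def, Matrix.sub_apply, ← hMPM]
  -- congruence matrices
  set L : Matrix (α ⊕ ↥W₁) (α ⊕ ↥W₁) (ZMod 2) := Matrix.fromBlocks 1 0 (-M₁ᵀ) 1 with hL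
  set U : Matrix (α ⊕ ↥W₂) (α ⊕ ↥W₂) (ZMod 2) := Matrix.fromBlocks 1 (-M₂) 0 1 with hU
  have hLdet : IsUnit L.det := by
    rw [hL, Matrix.det_fromBlocks_zero₁₂]
    simp
  have hUdet : IsUnit U.det := by
    rw [hU, Matrix.det_fromBlocks_zero₂₁]
    simp
  have key : L * ((Matrix.fromBlocks P Q Qᵀ R).submatrix (Sum.map id v₁) (Sum.map id v₂)) * U =
      Matrix.fromBlocks P 0 0 B' := by
    rw [hsub, hB', hL, hU, Matrix.fromBlocks_multiply, Matrix.fromBlocks_multiply]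
    congr 1 <;>
      simp [Matrix.neg_mul, Matrix.mul_neg, Matrix.mul_assoc, sub_eq_add_neg, add_comm]
  calc ((Matrix.fromBlocks P Q Qᵀ R).submatrix (Sum.map id v₁) (Sum.map id v₂)).rank
      = (L * ((Matrix.fromBlocks P Q Qᵀ R).submatrix (Sum.map id v₁) (Sum.map id v₂)) * U).rank :=
        by rw [Matrix.rank_mul_eq_left_of_isUnit_det _ _ hUdet,
          Matrix.rank_mul_eq_right_of_isUnit_det _ _ hLdet]
    _ = (Matrix.fromBlocks P 0 0 B').rank := by rw [key]
    _ = P.rank + B'.rank := rank_fromBlocks_diag P B'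
end

section
/- Let α and β be finite types with decidable equality, let A = Matrix.fromBlocks P Q Qᵀ R : Matrix (α ⊕ β) (α ⊕ β) (ZMod 2) be symmetric, and suppose M : Matrix α β (ZMod 2) satisfies Q = P * M. Then A.rank = P.rank + (R - Mᵀ * P * M).rank. (The rank of a graph equals the rank of a reducible vertex set plus the rank of the graph obtained by reducing it.) -/
open Matrix

/-- The submodule product is linearly equivalent to the product of submodules. -/
def prodSubEquiv {K M N : Type*} [Field K] [AddCommGroup M] [Module K M]
    [AddCommGroup N] [Module K N] (p : Submodule K M) (q : Submodule K N) :
    (p.prod q) ≃ₗ[K] p × q where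
  toFun x := (⟨x.1.1, x.2.1⟩, ⟨x.1.2, x.2.2⟩)
  invFun y := ⟨(y.1.1, y.2.1), ⟨y.1.2, y.2.2⟩⟩
  map_add' _ _ := rfl
  map_smul' _ _ := rfl
  left_inv _ := rfl
  right_inv _ := rfl

lemma finrank_prod_sub {K M N : Type*} [Field K] [AddCommGroup M] [Module K M]
    [AddCommGroup N] [Module K N] [FiniteDimensional K M] [FiniteDimensional K N]
    (p : Submodule K M) (q : Submodule K N) :
    Module.finrank K (p.prod q) = Module.finrank K p + Module.finrank K q := by
  rw [(prodSubEquiv p q).finrank_eq, Module.finrank_prod]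

lemma range_prodMap' {K M N M' N' : Type*} [Field K] [AddCommGroup M] [Module K M]
    [AddCommGroup N] [Module K N] [AddCommGroup M'] [Module K M']
    [AddCommGroup N'] [Module K N'] (f : M →ₗ[K] M') (g : N →ₗ[K] N') :
    LinearMap.range (f.prodMap g) = (LinearMap.range f).prod (LinearMap.range g) := by
  ext ⟨a, b⟩
  simp only [LinearMap.mem_range, Submodule.mem_prod, LinearMap.prodMap_apply, Prod.mk.injEq]
  constructor
  · rintro ⟨⟨x, y⟩, hx, hy⟩; exact ⟨⟨x, hx⟩, ⟨y, hy⟩⟩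
  · rintro ⟨⟨x, hx⟩, ⟨y, hy⟩⟩; exact ⟨(x, y), hx, hy⟩

lemma rank_fromBlocks_diag_s3 {K α β : Type*} [Field K] [Fintype α] [Fintype β]
    (P : Matrix α α K) (S : Matrix β β K) :
    (Matrix.fromBlocks P 0 0 S).rank = P.rank + S.rank := by
  classical
  let e := LinearEquiv.sumArrowLequivProdArrow α β K K
  have key : (Matrix.fromBlocks P 0 0 S).mulVecLin =
      (e.symm.toLinearMap.comp ((P.mulVecLin.prodMap S.mulVecLin).comp e.toLinearMap)) := by
    ext v i
    cases i <;>
      simp [e, Matrix.fromBlocks_mulVec, Matrix.mulVec, dotProduct,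
        LinearEquiv.sumArrowLequivProdArrow]
  rw [Matrix.rank, key, LinearMap.range_comp, LinearMap.range_comp,
    LinearEquiv.range, Submodule.map_top, LinearEquiv.finrank_map_eq,
    range_prodMap', finrank_prod_sub]
  rfl

/-- the binary rank of a graph equals the rank of a reducible vertex set plus
the binary rank of the reduced graph: `A.rank = P.rank + (R - Mᵀ * P * M).rank`. -/
theorem stmt_3 {α β : Type*} [Fintype α] [DecidableEq α] [Fintype β] [DecidableEq β]
    (P : Matrix α α (ZMod 2)) (Q : Matrix α β (ZMod 2)) (R : Matrix β β (ZMod 2))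
    (hA : (Matrix.fromBlocks P Q Qᵀ R)ᵀ = Matrix.fromBlocks P Q Qᵀ R)
    (M : Matrix α β (ZMod 2)) (hM : Q = P * M) :
    (Matrix.fromBlocks P Q Qᵀ R).rank = P.rank + (R - Mᵀ * P * M).rank := by
  have hP : Pᵀ = P := by
    have := congrArg Matrix.toBlocks₁₁ hA
    simpa [Matrix.fromBlocks_transpose, Matrix.toBlocks_fromBlocks₁₁] using this
  set S := R - Mᵀ * P * M with hS
  have hQt : Qᵀ = Mᵀ * P := by
    rw [hM, Matrix.transpose_mul, hP]
  have hfact : Matrix.fromBlocks P Q Qᵀ R =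
      Matrix.fromBlocks 1 0 Mᵀ 1 * Matrix.fromBlocks P 0 0 S *
        Matrix.fromBlocks 1 M 0 1 := by
    rw [Matrix.fromBlocks_multiply, Matrix.fromBlocks_multiply]
    congr 1 <;> simp [hM, hQt, hS, hP, Matrix.mul_assoc]
  have hdetL : IsUnit (Matrix.fromBlocks (1 : Matrix α α (ZMod 2)) 0 Mᵀ 1).det := by
    rw [Matrix.det_fromBlocks_zero₁₂]; simp
  have hdetR : IsUnit (Matrix.fromBlocks (1 : Matrix α α (ZMod 2)) M 0 1).det := by
    rw [Matrix.det_fromBlocks_zero₂₁]; simp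
  rw [hfact, Matrix.rank_mul_eq_left_of_isUnit_det _ _ hdetR,
    Matrix.rank_mul_eq_right_of_isUnit_det _ _ hdetL, rank_fromBlocks_diag_s3]
end

section
/- Let α and β be finite types with decidable equality, let A = Matrix.fromBlocks P Q Qᵀ R : Matrix (α ⊕ β) (α ⊕ β) (ZMod 2) be symmetric, and assume P is invertible (IsUnit P.det). Set B := R - Qᵀ * P⁻¹ * Q. Then for all i, j : β, B i j = 1 if and only if the determinant of the square submatrix of A with rows indexed by α ⊕ Unit via Sum.elim Sum.inl (fun _ => Sum.inr i) and columns indexed by α ⊕ Unit via Sum.elim Sum.inl (fun _ => Sum.inr j) is nonzero. -/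
/-! The bordered minor is a block matrix whose top-left block `P` is invertible, so the Schur
determinant formula gives `det P * (R - Qᵀ P⁻¹ Q) i j`; over `𝔽₂` the unit `det P` can be
cancelled and a nonzero entry is `1`. -/

open Matrix

theorem ZMod.eq_one_iff_ne_zero_of_two (x : ZMod 2) : x = 1 ↔ x ≠ 0 := by
  revert x; decide

namespace Matrix

variable {R : Type*}

theorem fromBlocks_submatrix_sum_map {l m n o l' m' n' o' : Type*} (A : Matrix n l R)
    (B : Matrix n m R) (C : Matrix o l R) (D : Matrix o m R)
    (f : n' → n) (g : o' → o) (f' : l' → l) (g' : m' → m) :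
    (fromBlocks A B C D).submatrix (Sum.map f g) (Sum.map f' g') =
      fromBlocks (A.submatrix f f') (B.submatrix f g') (C.submatrix g f') (D.submatrix g g') := by
  ext (a | a) (b | b) <;> rfl

theorem det_submatrix_fromBlocks_border [CommRing R] {m n : Type*} [Fintype m] [DecidableEq m]
    (A : Matrix m m R) (B : Matrix m n R) (C : Matrix n m R) (D : Matrix n n R) [Invertible A]
    (i j : n) :
    ((fromBlocks A B C D).submatrix (Sum.map id fun _ : Unit => i)
        (Sum.map id fun _ : Unit => j)).det = A.det * (D - C * ⅟A * B) i j := by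
  rw [fromBlocks_submatrix_sum_map, submatrix_id_id, det_fromBlocks₁₁, det_unique (n := Unit)]
  rfl

end Matrix

theorem stmt_5_general {α β : Type*} [Fintype α] [DecidableEq α]
    (P : Matrix α α (ZMod 2)) (Q : Matrix α β (ZMod 2)) (R : Matrix β β (ZMod 2))
    (hP : IsUnit P.det) :
    ∀ i j : β, (R - Qᵀ * P⁻¹ * Q) i j = 1 ↔
      ((Matrix.fromBlocks P Q Qᵀ R).submatrix
        (Sum.elim Sum.inl (fun _ : Unit => Sum.inr i))
        (Sum.elim Sum.inl (fun _ : Unit => Sum.inr j))).det ≠ 0 := by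
  intro i j
  let _ := P.invertibleOfIsUnitDet hP
  have hminor := det_submatrix_fromBlocks_border P Q Qᵀ R i j
  rw [invOf_eq_nonsing_inv] at hminor
  rw [ZMod.eq_one_iff_ne_zero_of_two, ← mul_ne_zero_iff_left hP.ne_zero, ← hminor]
  -- `Sum.map id g` unfolds to `Sum.elim Sum.inl (Sum.inr ∘ g)`
  rfl

/-- for a nonsingular reduction (P invertible), edges of the reduced graph are
detected by determinants: `(R - Qᵀ P⁻¹ Q) i j = 1` iff `det A_{α ∪ {i}, α ∪ {j}} ≠ 0`. -/
theorem stmt_5 {α β : Type*} [Fintype α] [DecidableEq α] [Fintype β] [DecidableEq β]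
    (P : Matrix α α (ZMod 2)) (Q : Matrix α β (ZMod 2)) (R : Matrix β β (ZMod 2))
    (hA : (Matrix.fromBlocks P Q Qᵀ R)ᵀ = Matrix.fromBlocks P Q Qᵀ R)
    (hP : IsUnit P.det) :
    ∀ i j : β, (R - Qᵀ * P⁻¹ * Q) i j = 1 ↔
      ((Matrix.fromBlocks P Q Qᵀ R).submatrix
        (Sum.elim Sum.inl (fun _ : Unit => Sum.inr i))
        (Sum.elim Sum.inl (fun _ : Unit => Sum.inr j))).det ≠ 0 :=
  stmt_5_general P Q R hP
end

section
/- Let α, β, γ be finite types with decidable equality and let A : Matrix (α ⊕ (β ⊕ γ)) (α ⊕ (β ⊕ γ)) (ZMod 2) be symmetric. Suppose M₁ : Matrix α (β ⊕ γ) (ZMod 2) satisfies A.toBlocks₁₂ = A.toBlocks₁₁ * M₁, and set B := A.toBlocks₂₂ - M₁ᵀ * A.toBlocks₁₁ * M₁ : Matrix (β ⊕ γ) (β ⊕ γ) (ZMod 2). Let A' be the reindexing of A along the sum-associativity equivalence α ⊕ (β ⊕ γ) ≃ (α ⊕ β) ⊕ γ. Then there exists M₂ : Matrix β γ (ZMod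 2) with B.toBlocks₁₂ = B.toBlocks₁₁ * M₂ if and only if there exists M : Matrix (α ⊕ β) γ (ZMod 2) with A'.toBlocks₁₂ = A'.toBlocks₁₁ * M. (That is, β is reducible in the reduction Γ_α(A) if and only if α ∪ β is reducible in A.) -/
/-!
Write `P = A₁₁` and split `M₁ = [X | Y]` along `β ⊕ γ`, so that the `α ∪ β` rows of `A` read
`[P, PX, PY; XᵀP, S₁₁, S₁₂]` and the reduction has blocks `B₁₁ = S₁₁ - XᵀPX`, `B₁₂ = S₁₂ - XᵀPY`.
Block Gaussian elimination of the `α` rows shows that `[PY; S₁₂]` lies in the column space of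
`[P, PX; XᵀP, S₁₁]` exactly when `S₁₂ - XᵀPY` lies in that of the Schur complement `S₁₁ - XᵀPX`.
-/

open Matrix

namespace Matrix

variable {R : Type*} {l m n p l₁ l₂ n₁ n₂ : Type*}

section Partition

variable [NonUnitalNonAssocSemiring R] [Fintype m]

lemma toCols₁_mul (A : Matrix l m R) (B : Matrix m (n₁ ⊕ n₂) R) :
    (A * B).toCols₁ = A * B.toCols₁ := rfl

lemma toCols₂_mul (A : Matrix l m R) (B : Matrix m (n₁ ⊕ n₂) R) :
    (A * B).toCols₂ = A * B.toCols₂ := rfl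

end Partition

lemma toBlocks₂₁_transpose {α : Type*} (A : Matrix (l₁ ⊕ l₂) (n₁ ⊕ n₂) α) :
    Aᵀ.toBlocks₂₁ = A.toBlocks₁₂ᵀ := rfl

lemma toBlocks₁₁_transpose {α : Type*} (A : Matrix (l₁ ⊕ l₂) (n₁ ⊕ n₂) α) :
    Aᵀ.toBlocks₁₁ = A.toBlocks₁₁ᵀ := rfl

lemma transpose_toCols₁ {α : Type*} (A : Matrix l (n₁ ⊕ n₂) α) :
    A.toCols₁ᵀ = Aᵀ.toRows₁ := rfl

section Reassociate

variable {l' m' n' : Type*} {α : Type*}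

lemma toBlocks₁₁_reindex_sumAssoc_symm (A : Matrix (l ⊕ m ⊕ n) (l' ⊕ m' ⊕ n') α) :
    (reindex (Equiv.sumAssoc l m n).symm (Equiv.sumAssoc l' m' n').symm A).toBlocks₁₁ =
      fromBlocks A.toBlocks₁₁ A.toBlocks₁₂.toCols₁ A.toBlocks₂₁.toRows₁
        A.toBlocks₂₂.toBlocks₁₁ := by
  ext (_ | _) (_ | _) <;> rfl

lemma toBlocks₁₂_reindex_sumAssoc_symm (A : Matrix (l ⊕ m ⊕ n) (l' ⊕ m' ⊕ n') α) :
    (reindex (Equiv.sumAssoc l m n).symm (Equiv.sumAssoc l' m' n').symm A).toBlocks₁₂ =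
      fromRows A.toBlocks₁₂.toCols₂ A.toBlocks₂₂.toBlocks₁₂ := by
  ext (_ | _) _ <;> rfl

end Reassociate

theorem exists_fromBlocks_mul_eq_fromRows_iff [Ring R] [Fintype m] [Fintype n]
    (P : Matrix m m R) (X : Matrix m n R) (Y : Matrix m p R) (S : Matrix n n R)
    (T : Matrix n p R) :
    (∃ M : Matrix (m ⊕ n) p R, fromRows (P * Y) T = fromBlocks P (P * X) (Xᵀ * P) S * M) ↔
      ∃ Z : Matrix n p R, T - Xᵀ * P * Y = (S - Xᵀ * P * X) * Z := by
  have hsplit (M : Matrix (m ⊕ n) p R) :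
      fromRows (P * Y) T = fromBlocks P (P * X) (Xᵀ * P) S * M ↔
        P * Y = P * M.toRows₁ + P * X * M.toRows₂ ∧
          T = Xᵀ * P * M.toRows₁ + S * M.toRows₂ := by
    rw [← fromRows_toRows M, fromBlocks_mul_fromRows, fromRows_ext_iff, toRows₁_fromRows,
      toRows₂_fromRows]
  simp only [hsplit]
  constructor
  · rintro ⟨M, hPY, hT⟩
    refine ⟨M.toRows₂, ?_⟩
    rw [hT, Matrix.mul_assoc Xᵀ P Y, hPY, Matrix.sub_mul]
    simp only [Matrix.mul_add, Matrix.mul_assoc]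
    abel
  · rintro ⟨Z, hZ⟩
    refine ⟨fromRows (Y - X * Z) Z, ?_, ?_⟩
    · simp only [toRows₁_fromRows, toRows₂_fromRows, Matrix.mul_sub, Matrix.mul_assoc,
        sub_add_cancel]
    · rw [toRows₁_fromRows, toRows₂_fromRows, ← sub_add_cancel T (Xᵀ * P * Y), hZ,
        Matrix.sub_mul, Matrix.mul_sub]
      simp only [Matrix.mul_assoc]
      abel

end Matrix

theorem stmt_6_general {α β γ : Type*} [Fintype α] [Fintype β]
    (A : Matrix (α ⊕ (β ⊕ γ)) (α ⊕ (β ⊕ γ)) (ZMod 2)) (hA : Aᵀ = A)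
    (M₁ : Matrix α (β ⊕ γ) (ZMod 2)) (hM₁ : A.toBlocks₁₂ = A.toBlocks₁₁ * M₁) :
    (∃ M₂ : Matrix β γ (ZMod 2),
        (A.toBlocks₂₂ - M₁ᵀ * A.toBlocks₁₁ * M₁).toBlocks₁₂ =
          (A.toBlocks₂₂ - M₁ᵀ * A.toBlocks₁₁ * M₁).toBlocks₁₁ * M₂) ↔
      (∃ M : Matrix (α ⊕ β) γ (ZMod 2),
        (Matrix.reindex (Equiv.sumAssoc α β γ).symm (Equiv.sumAssoc α β γ).symm A).toBlocks₁₂ =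
          (Matrix.reindex (Equiv.sumAssoc α β γ).symm (Equiv.sumAssoc α β γ).symm A).toBlocks₁₁ *
            M) := by
  set P := A.toBlocks₁₁
  have hP : Pᵀ = P := by rw [← toBlocks₁₁_transpose, hA]
  have hA₂₁ : A.toBlocks₂₁.toRows₁ = M₁.toCols₁ᵀ * P :=
    calc A.toBlocks₂₁.toRows₁ = A.toBlocks₁₂.toCols₁ᵀ := by
          rw [transpose_toCols₁, ← toBlocks₂₁_transpose, hA]
        _ = M₁.toCols₁ᵀ * P := by rw [hM₁, toCols₁_mul, transpose_mul, hP]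
  have hB₁₁ : (A.toBlocks₂₂ - M₁ᵀ * P * M₁).toBlocks₁₁ =
      A.toBlocks₂₂.toBlocks₁₁ - M₁.toCols₁ᵀ * P * M₁.toCols₁ := rfl
  have hB₁₂ : (A.toBlocks₂₂ - M₁ᵀ * P * M₁).toBlocks₁₂ =
      A.toBlocks₂₂.toBlocks₁₂ - M₁.toCols₁ᵀ * P * M₁.toCols₂ := rfl
  rw [hB₁₁, hB₁₂, toBlocks₁₁_reindex_sumAssoc_symm, toBlocks₁₂_reindex_sumAssoc_symm, hA₂₁,
    hM₁, toCols₁_mul, toCols₂_mul, exists_fromBlocks_mul_eq_fromRows_iff]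

/-- `β` is reducible in the reduction `Γ_α(A)` iff `α ∪ β` is reducible in `A`. -/
theorem stmt_6 {α β γ : Type*} [Fintype α] [DecidableEq α] [Fintype β] [DecidableEq β]
    [Fintype γ] [DecidableEq γ]
    (A : Matrix (α ⊕ (β ⊕ γ)) (α ⊕ (β ⊕ γ)) (ZMod 2)) (hA : Aᵀ = A)
    (M₁ : Matrix α (β ⊕ γ) (ZMod 2)) (hM₁ : A.toBlocks₁₂ = A.toBlocks₁₁ * M₁) :
    (∃ M₂ : Matrix β γ (ZMod 2),
        (A.toBlocks₂₂ - M₁ᵀ * A.toBlocks₁₁ * M₁).toBlocks₁₂ =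
          (A.toBlocks₂₂ - M₁ᵀ * A.toBlocks₁₁ * M₁).toBlocks₁₁ * M₂) ↔
      (∃ M : Matrix (α ⊕ β) γ (ZMod 2),
        (Matrix.reindex (Equiv.sumAssoc α β γ).symm (Equiv.sumAssoc α β γ).symm A).toBlocks₁₂ =
          (Matrix.reindex (Equiv.sumAssoc α β γ).symm (Equiv.sumAssoc α β γ).symm A).toBlocks₁₁ *
            M) :=
  stmt_6_general A hA M₁ hM₁
end

section
/- Let V be a finite type with decidable equality and let A, B : Matrix V V (ZMod 2) be symmetric. Suppose that for every finset S ⊆ V, the principal submatrix of A on S (i.e. A.submatrix Subtype.val Subtype.val with indices in ↥S) is invertible if and only if the principal submatrix of B on S is invertible. Then A = B. (A graph is uniquely determined by its vertex set together with its pivotal poset, the family of vertex subsets whose induced subgraph has invertible adjacency matrix over 𝔽₂.) -/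
open Matrix

private lemma zmod2_eq_of_isUnit_iff (x y : ZMod 2) (h : IsUnit x ↔ IsUnit y) : x = y := by
  rw [isUnit_iff_ne_zero, isUnit_iff_ne_zero] at h
  revert h; revert x y; decide

private lemma zmod2_sq (x : ZMod 2) : x * x = x := by revert x; decide

private lemma det_single {V : Type*} [Fintype V] [DecidableEq V]
    (A : Matrix V V (ZMod 2)) (i : V) :
    (A.submatrix (Subtype.val : ↥({i} : Finset V) → V)
      (Subtype.val : ↥({i} : Finset V) → V)).det = A i i := by
  let e : Fin 1 ≃ ↥({i} : Finset V) :=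
    { toFun := fun _ => ⟨i, by simp⟩
      invFun := fun _ => 0
      left_inv := fun x => by fin_cases x <;> rfl
      right_inv := fun x => by
        ext; exact (Finset.mem_singleton.mp x.2).symm }
  rw [← Matrix.det_submatrix_equiv_self e, Matrix.submatrix_submatrix,
    Matrix.det_fin_one]
  rfl

private lemma det_pair {V : Type*} [Fintype V] [DecidableEq V]
    (A : Matrix V V (ZMod 2)) (i j : V) (hij : i ≠ j) :
    (A.submatrix (Subtype.val : ↥({i, j} : Finset V) → V)
      (Subtype.val : ↥({i, j} : Finset V) → V)).det
      = A i i * A j j - A i j * A j i := by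
  let e : Fin 2 ≃ ↥({i, j} : Finset V) :=
    { toFun := ![⟨i, by simp⟩, ⟨j, by simp⟩]
      invFun := fun x => if x.1 = i then 0 else 1
      left_inv := fun x => by
        fin_cases x
        · simp
        · simp [if_neg (Ne.symm hij)]
      right_inv := fun x => by
        rcases Finset.mem_insert.mp x.2 with h1 | h1
        · ext; simp [h1]
        · have h1 := Finset.mem_singleton.mp h1
          ext; simp [h1, Ne.symm hij] }
  rw [← Matrix.det_submatrix_equiv_self e, Matrix.submatrix_submatrix,
    Matrix.det_fin_two]
  rfl

/-- a graph is uniquely determined by its pivotal poset (the family of vertex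
subsets whose principal submatrix is invertible over `𝔽₂`). -/
theorem stmt_9 {V : Type*} [Fintype V] [DecidableEq V]
    (A B : Matrix V V (ZMod 2)) (hA : Aᵀ = A) (hB : Bᵀ = B)
    (h : ∀ S : Finset V,
      IsUnit (A.submatrix (Subtype.val : ↥S → V) (Subtype.val : ↥S → V)).det ↔
        IsUnit (B.submatrix (Subtype.val : ↥S → V) (Subtype.val : ↥S → V)).det) :
    A = B := by
  have hdiag : ∀ i, A i i = B i i := by
    intro i
    have := h ({i} : Finset V)
    rw [det_single, det_single] at this
    exact zmod2_eq_of_isUnit_iff _ _ this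
  ext i j
  by_cases hij : i = j
  · subst hij; exact hdiag i
  · have hAij : A j i = A i j := congrFun (congrFun hA i) j
    have hBij : B j i = B i j := congrFun (congrFun hB i) j
    have := h ({i, j} : Finset V)
    rw [det_pair A i j hij, det_pair B i j hij] at this
    have key := zmod2_eq_of_isUnit_iff _ _ this
    rw [hAij, hBij, zmod2_sq, zmod2_sq, hdiag i, hdiag j] at key
    exact sub_right_injective key
end

section
/- Let V be a finite type with decidable equality and A : Matrix V V (ZMod 2) symmetric. For a finset W ⊆ V say W is reducible in A if there exists a matrix M (indexed by ↥W × ↥Wᶜ over ZMod 2) such that for all i ∈ W and j ∉ W, A i j = ∑_{k ∈ W} A i k * M k j. Then a finset W is nonempty, reducible, and has no nonempty proper subset that is reducible (i.e., W is minimally reducible) if and only if exactly one of the following holds: (1) W = {v} for some v with A v v = 1 (a positive vertex, the domain of the positive rule); (2) W = {v} for some v with A v v = 0 and A v u = 0 for all u (an isolated negative vertex, the domain of the negative rule); or (3) W = {v, w} for distinct v, w with A v v = 0, A w w = 0, and A v w = 1 (an adjacent pair of negative vertices, the domain of the double rule). -/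
/-!
A set whose principal submatrix has a right inverse is reducible. This covers a looped vertex
and an adjacent pair of unlooped vertices (principal submatrix `!![0, 1; 1, 0]`, its own
inverse), so a minimally reducible set containing either is exactly it. Otherwise the principal
submatrix on `W` vanishes, reducibility forces the rows of `W` to vanish altogether, and every
single vertex of `W` is already reducible. Conversely the only nonempty proper subsets of such
a pair are its two singletons, which are irreducible since each vertex is unlooped and has a
neighbour.
-/

open Matrix

/-- A finset `W` of vertices is reducible in `A` if the off-diagonal block of `A` from `W`
to its complement lies in the column space of the principal submatrix of `A` on `W`. -/
def IsReducibleSet {V : Type*} [Fintype V] [DecidableEq V]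
    (A : Matrix V V (ZMod 2)) (W : Finset V) : Prop :=
  ∃ M : Matrix ↥W ↥Wᶜ (ZMod 2), ∀ (i : ↥W) (j : ↥Wᶜ),
    A (i : V) (j : V) = ∑ k : ↥W, A (i : V) (k : V) * M k j

open Finset

lemma ZMod.eq_zero_of_ne_one {x : ZMod 2} (h : x ≠ 1) : x = 0 := by
  revert x; decide

section

variable {V : Type*} [Fintype V] [DecidableEq V] {A : Matrix V V (ZMod 2)} {W : Finset V}

def IsMinimallyReducibleSet (A : Matrix V V (ZMod 2)) (W : Finset V) : Prop :=
  W.Nonempty ∧ IsReducibleSet A W ∧ ∀ S : Finset V, S ⊂ W → S.Nonempty → ¬ IsReducibleSet A S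

lemma isReducibleSet_of_submatrix_mul_eq_one (N : Matrix W W (ZMod 2))
    (hN : A.submatrix (↑) (↑) * N = 1) : IsReducibleSet A W := by
  set C : Matrix W ↥Wᶜ (ZMod 2) := A.submatrix (↑) (↑)
  refine ⟨N * C, fun i j => ?_⟩
  calc A i j = (A.submatrix ((↑) : W → V) ((↑) : W → V) * N * C) i j := by
        rw [hN, Matrix.one_mul]; rfl
    _ = ∑ k : W, A i k * (N * C) k j := by rw [Matrix.mul_assoc, Matrix.mul_apply]; rfl

lemma IsReducibleSet.apply_eq_zero (hW : IsReducibleSet A W) {i : V} (hi : i ∈ W)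
    (hrow : ∀ k ∈ W, A i k = 0) (j : V) : A i j = 0 := by
  by_cases hj : j ∈ W
  · exact hrow j hj
  obtain ⟨M, hM⟩ := hW
  rw [hM ⟨i, hi⟩ ⟨j, mem_compl.2 hj⟩]
  exact sum_eq_zero fun k _ => by rw [hrow k k.2, zero_mul]

lemma isReducibleSet_singleton_iff {v : V} :
    IsReducibleSet A {v} ↔ A v v = 1 ∨ ∀ u, A v u = 0 := by
  have hcoe : ∀ a : ↥({v} : Finset V), (a : V) = v := fun a => mem_singleton.1 a.2
  constructor
  · intro hred
    by_cases hv : A v v = 1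
    · exact .inl hv
    · exact .inr (hred.apply_eq_zero (mem_singleton_self v) fun k hk => by
        rw [mem_singleton.1 hk]; exact ZMod.eq_zero_of_ne_one hv)
  · rintro (hv | hrow)
    · refine isReducibleSet_of_submatrix_mul_eq_one 1 ?_
      ext a b
      rw [Subsingleton.elim a b]
      simp [hcoe, hv]
    · exact ⟨0, fun i j => by simp [hcoe, hrow]⟩

lemma isReducibleSet_pair (hA : A.IsSymm) {v w : V} (hvw : v ≠ w) (hv : A v v = 0)
    (hw : A w w = 0) (hvw1 : A v w = 1) : IsReducibleSet A {v, w} := by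
  have hwv1 : A w v = 1 := (hA.apply v w).trans hvw1
  refine isReducibleSet_of_submatrix_mul_eq_one (A.submatrix (↑) (↑)) ?_
  ext a b
  rw [Matrix.mul_apply]
  simp only [submatrix_apply]
  rw [sum_coe_sort {v, w} fun k => A a k * A k b, sum_pair hvw]
  have ha := a.2
  have hb := b.2
  simp only [mem_insert, mem_singleton] at ha hb
  rcases ha with ha | ha <;> rcases hb with hb | hb <;>
    simp [Matrix.one_apply, ← Subtype.coe_inj, ha, hb, hv, hw, hvw1, hwv1, hvw, hvw.symm]

lemma IsMinimallyReducibleSet.eq_of_subset (hW : IsMinimallyReducibleSet A W) {S : Finset V}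
    (hSW : S ⊆ W) (hS : S.Nonempty) (hred : IsReducibleSet A S) : S = W := by
  by_contra hne
  exact hW.2.2 S (ssubset_of_subset_of_ne hSW hne) hS hred

lemma isMinimallyReducibleSet_singleton (v : V) (hred : IsReducibleSet A {v}) :
    IsMinimallyReducibleSet A {v} :=
  ⟨singleton_nonempty v, hred, fun _ hS hne _ => hne.ne_empty (ssubset_singleton_iff.1 hS)⟩

lemma isMinimallyReducibleSet_pair (hA : A.IsSymm) {v w : V} (hvw : v ≠ w) (hv : A v v = 0)
    (hw : A w w = 0) (hvw1 : A v w = 1) : IsMinimallyReducibleSet A {v, w} := by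
  refine ⟨insert_nonempty v {w}, isReducibleSet_pair hA hvw hv hw hvw1, fun S hS hne hred => ?_⟩
  obtain ⟨u, rfl⟩ : ∃ u, S = {u} := card_eq_one.1 <| by
    have := card_lt_card hS
    rw [card_pair hvw] at this
    have := hne.card_pos
    omega
  have hu : u = v ∨ u = w := by simpa using hS.1 (mem_singleton_self u)
  have hwv1 : A w v = 1 := (hA.apply v w).trans hvw1
  rcases hu with rfl | rfl <;> rcases isReducibleSet_singleton_iff.1 hred with h | h
  · exact zero_ne_one (hv.symm.trans h)
  · exact zero_ne_one ((h w).symm.trans hvw1)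
  · exact zero_ne_one (hw.symm.trans h)
  · exact zero_ne_one ((h v).symm.trans hwv1)

lemma IsMinimallyReducibleSet.eq_singleton_or_eq_pair (hA : A.IsSymm)
    (hW : IsMinimallyReducibleSet A W) :
    (∃ v, W = {v} ∧ A v v = 1) ∨ (∃ v, W = {v} ∧ A v v = 0 ∧ ∀ u, A v u = 0) ∨
      ∃ v w, v ≠ w ∧ W = {v, w} ∧ A v v = 0 ∧ A w w = 0 ∧ A v w = 1 := by
  obtain ⟨v, hv⟩ := hW.1
  by_cases hpos : ∃ u ∈ W, A u u = 1
  · obtain ⟨u, hu, huu⟩ := hpos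
    exact .inl ⟨u, (hW.eq_of_subset (singleton_subset_iff.2 hu) (singleton_nonempty u)
      (isReducibleSet_singleton_iff.2 (.inl huu))).symm, huu⟩
  have hdiag : ∀ u ∈ W, A u u = 0 := fun u hu =>
    ZMod.eq_zero_of_ne_one fun h => hpos ⟨u, hu, h⟩
  by_cases hedge : ∃ a ∈ W, ∃ b ∈ W, a ≠ b ∧ A a b = 1
  · obtain ⟨a, ha, b, hb, hab, hab1⟩ := hedge
    have hWab := hW.eq_of_subset (insert_subset ha (singleton_subset_iff.2 hb))
      (insert_nonempty a {b}) (isReducibleSet_pair hA hab (hdiag a ha) (hdiag b hb) hab1)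
    exact .inr (.inr ⟨a, b, hab, hWab.symm, hdiag a ha, hdiag b hb, hab1⟩)
  have hrow : ∀ u, A v u = 0 := hW.2.1.apply_eq_zero hv fun k hk => by
    rcases eq_or_ne k v with rfl | hkv
    · exact hdiag k hk
    · exact ZMod.eq_zero_of_ne_one fun h => hedge ⟨v, hv, k, hk, hkv.symm, h⟩
  have hWv := hW.eq_of_subset (singleton_subset_iff.2 hv) (singleton_nonempty v)
    (isReducibleSet_singleton_iff.2 (.inr hrow))
  exact .inr (.inl ⟨v, hWv.symm, hrow v, hrow⟩)

end

/-- the minimally reducible vertex sets are exactly the domains of the three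
combinatorial reduction rules: a positive (looped) vertex, an isolated negative vertex,
or an adjacent pair of negative vertices. -/
theorem stmt_10 {V : Type*} [Fintype V] [DecidableEq V]
    (A : Matrix V V (ZMod 2)) (hA : Aᵀ = A) (W : Finset V) :
    (W.Nonempty ∧ IsReducibleSet A W ∧
        ∀ S : Finset V, S ⊂ W → S.Nonempty → ¬ IsReducibleSet A S) ↔
      ((∃ v : V, W = {v} ∧ A v v = 1) ∨
        (∃ v : V, W = {v} ∧ A v v = 0 ∧ ∀ u : V, A v u = 0) ∨
        (∃ v w : V, v ≠ w ∧ W = {v, w} ∧ A v v = 0 ∧ A w w = 0 ∧ A v w = 1)) := by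
  show IsMinimallyReducibleSet A W ↔ _
  refine ⟨fun hW => hW.eq_singleton_or_eq_pair hA, ?_⟩
  rintro (⟨v, rfl, hv⟩ | ⟨v, rfl, -, hrow⟩ | ⟨v, w, hvw, rfl, hv, hw, hvw1⟩)
  · exact isMinimallyReducibleSet_singleton v (isReducibleSet_singleton_iff.2 (.inl hv))
  · exact isMinimallyReducibleSet_singleton v (isReducibleSet_singleton_iff.2 (.inr hrow))
  · exact isMinimallyReducibleSet_pair hA hvw hv hw hvw1
end

section
/- Let V be a finite type with decidable equality and A : Matrix V V (ZMod 2) symmetric. Suppose W ⊆ V is a nonempty finset that is reducible in A, i.e. there exists a matrix M with A i j = ∑_{k ∈ W} A i k * M k j for all i ∈ W and j ∉ W. Then at least one of the following holds: (1) there is v ∈ W with A v v = 1; (2) there are distinct v, w ∈ W with A v v = 0, A w w = 0, and A v w = 1; or (3) there is v ∈ W with A v v = 0 and A v u = 0 for all u : V. (Every nonempty reducible vertex set contains the domain of an applicable combinatorial reduction rule; consequently every graph reduction factors into positive, double, and negative rules.) -/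
open Matrix

/-- every nonempty reducible vertex set contains the domain of an applicable
combinatorial reduction rule (positive, double, or negative). -/
theorem stmt_11 {V : Type*} [Fintype V] [DecidableEq V]
    (A : Matrix V V (ZMod 2)) (hA : Aᵀ = A) (W : Finset V) (hW : W.Nonempty)
    (hred : ∃ M : Matrix ↥W ↥Wᶜ (ZMod 2), ∀ (i : ↥W) (j : ↥Wᶜ),
      A (i : V) (j : V) = ∑ k : ↥W, A (i : V) (k : V) * M k j) :
    (∃ v ∈ W, A v v = 1) ∨
      (∃ v ∈ W, ∃ w ∈ W, v ≠ w ∧ A v v = 0 ∧ A w w = 0 ∧ A v w = 1) ∨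
      (∃ v ∈ W, A v v = 0 ∧ ∀ u : V, A v u = 0) := by
  by_cases h1 : ∃ v ∈ W, A v v = 1
  · exact Or.inl h1
  by_cases h2 : ∃ v ∈ W, ∃ w ∈ W, v ≠ w ∧ A v v = 0 ∧ A w w = 0 ∧ A v w = 1
  · exact Or.inr (Or.inl h2)
  push_neg at h1 h2
  have hz : ∀ x : ZMod 2, x ≠ 1 → x = 0 := by decide
  have hdiag : ∀ v ∈ W, A v v = 0 := fun v hv => hz _ (h1 v hv)
  have hWW : ∀ v ∈ W, ∀ k ∈ W, A v k = 0 := by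
    intro v hv k hk
    by_cases hvk : v = k
    · subst hvk; exact hdiag v hv
    · exact hz _ (h2 v hv k hk hvk (hdiag v hv) (hdiag k hk))
  obtain ⟨v, hv⟩ := hW
  refine Or.inr (Or.inr ⟨v, hv, hdiag v hv, fun u => ?_⟩)
  by_cases hu : u ∈ W
  · exact hWW v hv u hu
  · obtain ⟨M, hM⟩ := hred
    rw [hM ⟨v, hv⟩ ⟨u, Finset.mem_compl.mpr hu⟩]
    exact Finset.sum_eq_zero fun k _ => by rw [hWW v hv k k.2, zero_mul]
end

section
/- Let β be a finite type with decidable equality, let Q : Matrix Unit β (ZMod 2) and let R : Matrix β β (ZMod 2) be symmetric. Let A := Matrix.fromBlocks (1 : Matrix Unit Unit (ZMod 2)) Q Qᵀ R : Matrix (Unit ⊕ β) (Unit ⊕ β) (ZMod 2) (the adjacency matrix of a graph whose first vertex has a loop). Then A.rank = 1 + (R - Qᵀ * Q).rank. (The positive rule reduces the binary rank by exactly 1, the number of vertices removed.) -/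
/-!
Block Gaussian elimination with the invertible pivot block writes the matrix as
`L * fromBlocks A 0 0 (D - C A⁻¹ B) * U` with `L`, `U` block unitriangular, so its rank is
`rank A` plus the rank of the Schur complement; for the `1 × 1` pivot `1` this is
`1 + rank (R - Qᵀ Q)`.
-/

open Matrix

namespace Submodule

variable {R M N : Type*} [Semiring R] [AddCommMonoid M] [AddCommMonoid N] [Module R M] [Module R N]

def prodEquiv (p : Submodule R M) (q : Submodule R N) : p.prod q ≃ₗ[R] p × q where
  toFun x := (⟨x.1.1, x.2.1⟩, ⟨x.1.2, x.2.2⟩)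
  invFun x := ⟨(x.1.1, x.2.1), x.1.2, x.2.2⟩
  map_add' _ _ := rfl
  map_smul' _ _ := rfl

theorem finrank_prod {K V W : Type*} [DivisionRing K] [AddCommGroup V] [AddCommGroup W]
    [Module K V] [Module K W] [FiniteDimensional K V] [FiniteDimensional K W]
    (p : Submodule K V) (q : Submodule K W) :
    Module.finrank K (p.prod q) = Module.finrank K p + Module.finrank K q := by
  rw [(prodEquiv p q).finrank_eq, Module.finrank_prod]

end Submodule

namespace Matrix

variable {K m n : Type*} [Field K] [Fintype m] [Fintype n]

theorem rank_fromBlocks_zero_zero (A : Matrix m m K) (D : Matrix n n K) :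
    (fromBlocks A 0 0 D).rank = A.rank + D.rank := by
  classical
  let bm := Pi.basisFun K m
  let bn := Pi.basisFun K n
  have hlin : toLin (bm.prod bn) (bm.prod bn) (fromBlocks A 0 0 D) =
      (toLin bm bm A).prodMap (toLin bn bn D) := by
    apply (LinearMap.toMatrix (bm.prod bn) (bm.prod bn)).injective
    rw [LinearMap.toMatrix_prodMap, LinearMap.toMatrix_toLin, LinearMap.toMatrix_toLin,
      LinearMap.toMatrix_toLin]
  rw [rank_eq_finrank_range_toLin _ (bm.prod bn) (bm.prod bn), hlin, LinearMap.range_prodMap,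
    Submodule.finrank_prod, ← rank_eq_finrank_range_toLin, ← rank_eq_finrank_range_toLin]

theorem rank_fromBlocks_of_invertible₁₁ [DecidableEq m] (A : Matrix m m K) (B : Matrix m n K)
    (C : Matrix n m K) (D : Matrix n n K) [Invertible A] :
    (fromBlocks A B C D).rank = A.rank + (D - C * ⅟A * B).rank := by
  classical
  rw [fromBlocks_eq_of_invertible₁₁, rank_mul_eq_left_of_isUnit_det _ _ (by simp),
    rank_mul_eq_right_of_isUnit_det _ _ (by simp), rank_fromBlocks_zero_zero]

end Matrix

theorem stmt_13_general {β : Type*} [Fintype β]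
    (Q : Matrix Unit β (ZMod 2)) (R : Matrix β β (ZMod 2)) :
    (Matrix.fromBlocks (1 : Matrix Unit Unit (ZMod 2)) Q Qᵀ R).rank =
      1 + (R - Qᵀ * Q).rank := by
  have : Invertible (1 : Matrix Unit Unit (ZMod 2)) := invertibleOne
  rw [rank_fromBlocks_of_invertible₁₁, invOf_one, Matrix.mul_one, rank_one, Fintype.card_unit]

/-- the positive rule reduces the binary rank by exactly 1:
`rank (fromBlocks 1 Q Qᵀ R) = 1 + rank (R - Qᵀ * Q)`. -/
theorem stmt_13 {β : Type*} [Fintype β] [DecidableEq β]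
    (Q : Matrix Unit β (ZMod 2)) (R : Matrix β β (ZMod 2)) (hR : Rᵀ = R) :
    (Matrix.fromBlocks (1 : Matrix Unit Unit (ZMod 2)) Q Qᵀ R).rank =
      1 + (R - Qᵀ * Q).rank :=
  stmt_13_general Q R
end

section
/- Let β be a finite type with decidable equality, let J := !![0, 1; 1, 0] : Matrix (Fin 2) (Fin 2) (ZMod 2), let Q : Matrix (Fin 2) β (ZMod 2) and let R : Matrix β β (ZMod 2) be symmetric. Let A := Matrix.fromBlocks J Q Qᵀ R : Matrix (Fin 2 ⊕ β) (Fin 2 ⊕ β) (ZMod 2) (the adjacency matrix of a graph whose first two vertices are loopless and adjacent). Then A.rank = 2 + (R - Qᵀ * J * Q).rank. (The double rule is a rank-two reduction: it reduces the binary rank by exactly 2, the number of vertices removed.) -/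
open Matrix

section Aux

variable {R M M₂ M₃ M₄ : Type*} [CommRing R] [AddCommGroup M] [AddCommGroup M₂]
  [AddCommGroup M₃] [AddCommGroup M₄] [Module R M] [Module R M₂] [Module R M₃] [Module R M₄]

lemma aux_range_prodMap (f : M →ₗ[R] M₂) (g : M₃ →ₗ[R] M₄) :
    LinearMap.range (f.prodMap g) = (LinearMap.range f).prod (LinearMap.range g) := by
  ext ⟨x, y⟩
  simp only [LinearMap.mem_range, Submodule.mem_prod, LinearMap.prodMap_apply, Prod.ext_iff,
    Prod.exists]
  constructor
  · rintro ⟨a, b, h1, h2⟩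
    exact ⟨⟨a, h1⟩, ⟨b, h2⟩⟩
  · rintro ⟨⟨a, h1⟩, ⟨b, h2⟩⟩
    exact ⟨a, b, h1, h2⟩

/-- `p.prod q` is linearly equivalent to `p × q`. -/
def auxProdEquiv (p : Submodule R M) (q : Submodule R M₂) : (p.prod q) ≃ₗ[R] p × q where
  toFun x := (⟨x.1.1, x.2.1⟩, ⟨x.1.2, x.2.2⟩)
  invFun x := ⟨(x.1.1, x.2.1), ⟨x.1.2, x.2.2⟩⟩
  left_inv x := rfl
  right_inv x := rfl
  map_add' x y := rfl
  map_smul' r x := rfl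

end Aux

lemma aux_rank_fromBlocks_zero {K : Type*} [Field K] {m₁ m₂ n₁ n₂ : Type*}
    [Fintype m₁] [Fintype m₂] [Fintype n₁] [Fintype n₂]
    (A : Matrix m₁ n₁ K) (D : Matrix m₂ n₂ K) :
    (fromBlocks A 0 0 D).rank = A.rank + D.rank := by
  classical
  set e₁ := LinearEquiv.sumArrowLequivProdArrow n₁ n₂ K K
  set e₂ := LinearEquiv.sumArrowLequivProdArrow m₁ m₂ K K
  have key : (fromBlocks A 0 0 D).mulVecLin =
      (e₂.symm : (m₁ → K) × (m₂ → K) →ₗ[K] (m₁ ⊕ m₂ → K)).comp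
        ((A.mulVecLin.prodMap D.mulVecLin).comp (e₁ : (n₁ ⊕ n₂ → K) →ₗ[K] _)) := by
    refine LinearMap.ext fun v => ?_
    funext i
    have hv : v = Sum.elim (v ∘ Sum.inl) (v ∘ Sum.inr) := (Sum.elim_comp_inl_inr v).symm
    rw [Matrix.mulVecLin_apply, hv, fromBlocks_mulVec]
    cases i <;>
      simp [e₁, e₂, LinearEquiv.sumArrowLequivProdArrow, Equiv.sumArrowEquivProdArrow,
        Matrix.mulVecLin_apply, Function.comp]
  rw [Matrix.rank, key, LinearMap.range_comp, LinearMap.range_comp, LinearEquiv.range,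
    Submodule.map_top, LinearEquiv.finrank_map_eq, aux_range_prodMap,
    (auxProdEquiv _ _).finrank_eq, Module.finrank_prod, Matrix.rank, Matrix.rank]

/-- the double rule is a rank-two reduction:
`rank (fromBlocks J Q Qᵀ R) = 2 + rank (R - Qᵀ * J * Q)` where `J = !![0,1;1,0]`. -/
theorem stmt_14 {β : Type*} [Fintype β] [DecidableEq β]
    (Q : Matrix (Fin 2) β (ZMod 2)) (R : Matrix β β (ZMod 2)) (hR : Rᵀ = R) :
    (Matrix.fromBlocks (!![0, 1; 1, 0] : Matrix (Fin 2) (Fin 2) (ZMod 2)) Q Qᵀ R).rank =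
      2 + (R - Qᵀ * (!![0, 1; 1, 0] : Matrix (Fin 2) (Fin 2) (ZMod 2)) * Q).rank := by
  set J : Matrix (Fin 2) (Fin 2) (ZMod 2) := !![0, 1; 1, 0] with hJ
  have hJJ : J * J = 1 := by
    rw [hJ]
    ext i j
    fin_cases i <;> fin_cases j <;> simp [Matrix.mul_apply, Fin.sum_univ_two] <;> decide
  letI : Invertible J := ⟨J, hJJ, hJJ⟩
  have hinv : ⅟J = J := rfl
  have hdetJ : IsUnit J.det := Matrix.isUnit_det_of_invertible J
  have hL : IsUnit (fromBlocks (1 : Matrix (Fin 2) (Fin 2) (ZMod 2)) 0 (Qᵀ * ⅟J) 1).det := by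
    rw [det_fromBlocks_zero₁₂, det_one, det_one, one_mul]
    exact isUnit_one
  have hU : IsUnit (fromBlocks (1 : Matrix (Fin 2) (Fin 2) (ZMod 2)) (⅟J * Q) 0 1).det := by
    rw [det_fromBlocks_zero₂₁, det_one, det_one, one_mul]
    exact isUnit_one
  rw [fromBlocks_eq_of_invertible₁₁ J Q Qᵀ R,
    Matrix.rank_mul_eq_left_of_isUnit_det _ _ hU,
    Matrix.rank_mul_eq_right_of_isUnit_det _ _ hL,
    aux_rank_fromBlocks_zero, Matrix.rank_of_isUnit J (isUnit_of_invertible J), hinv]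
  simp [Fintype.card_fin]
end

section
/- Let α and β be finite types with decidable equality, let A = Matrix.fromBlocks P Q Qᵀ R : Matrix (α ⊕ β) (α ⊕ β) (ZMod 2) be symmetric with P invertible (IsUnit P.det), and let the pivot of A by α be B := Matrix.fromBlocks P⁻¹ (P⁻¹ * Q) (Qᵀ * P⁻¹) (R - Qᵀ * P⁻¹ * Q). Let X : Finset (α ⊕ β) be the set of all elements of the form Sum.inl a. Then for every finset S ⊆ α ⊕ β, the principal submatrix of B on S is invertible if and only if the principal submatrix of A on the symmetric difference S Δ X is invertible. (The pivotal poset of the pivot is the symmetric difference of the pivotal poset with the pivoted set: 𝓡₀(A ∗ X) = 𝓡₀(A) ⊕ X.) -/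
open Matrix

private lemma zmod2_vec_add_self {ι : Type*} (w : ι → ZMod 2) : w + w = 0 := by
  funext i
  have : ∀ x : ZMod 2, x + x = 0 := by decide
  exact this (w i)

private lemma notUnit_iff_exists {n : Type*} [Fintype n] [DecidableEq n]
    (M : Matrix n n (ZMod 2)) (S : Finset n) :
    ¬ IsUnit (M.submatrix (Subtype.val : ↥S → n) (Subtype.val : ↥S → n)).det ↔
      ∃ v : n → ZMod 2, v ≠ 0 ∧ (∀ i ∉ S, v i = 0) ∧ ∀ i ∈ S, M.mulVec v i = 0 := by
  rw [isUnit_iff_ne_zero, not_ne_iff, ← Matrix.exists_mulVec_eq_zero_iff]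
  constructor
  · rintro ⟨w, hw, hker⟩
    refine ⟨fun i => if h : i ∈ S then w ⟨i, h⟩ else 0, ?_, ?_, ?_⟩
    · intro h0
      apply hw
      funext j
      have := congrFun h0 (j : n)
      simpa [j.2] using this
    · intro i hi; simp [hi]
    · intro i hi
      have h := congrFun hker ⟨i, hi⟩
      simp only [Matrix.mulVec, dotProduct, Matrix.submatrix_apply, Pi.zero_apply] at h ⊢
      rw [show (∑ j : n, M i j * (if h : j ∈ S then w ⟨j, h⟩ else 0))
          = ∑ j ∈ S, M i j * (if h : j ∈ S then w ⟨j, h⟩ else 0) from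
          (Finset.sum_subset (Finset.subset_univ S) (by intro x _ hx; simp [hx])).symm,
        ← Finset.sum_coe_sort]
      simpa using h
  · rintro ⟨v, hv, hsupp, hker⟩
    refine ⟨fun j => v (j : n), ?_, ?_⟩
    · intro h0
      apply hv
      funext i
      by_cases hi : i ∈ S
      · exact congrFun h0 ⟨i, hi⟩
      · exact hsupp i hi
    · funext i
      have h := hker (i : n) i.2
      simp only [Matrix.mulVec, dotProduct, Matrix.submatrix_apply, Pi.zero_apply] at h ⊢
      rw [Finset.sum_coe_sort S (fun j => M (i : n) j * v j),
        show (∑ j ∈ S, M (i : n) j * v j) = ∑ j : n, M (i : n) j * v j from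
          Finset.sum_subset (Finset.subset_univ S) (fun x _ hx => by simp [hsupp x hx])]
      exact h

/-- the pivotal poset of the pivot of `A` by the first block `X = α` is the
symmetric difference of the pivotal poset of `A` with `X`:
a principal submatrix of `A ∗ X` on `S` is invertible iff the principal submatrix of `A`
on `S Δ X` is invertible. -/
theorem stmt_15 {α β : Type*} [Fintype α] [DecidableEq α] [Fintype β] [DecidableEq β]
    (P : Matrix α α (ZMod 2)) (Q : Matrix α β (ZMod 2)) (R : Matrix β β (ZMod 2))
    (hA : (Matrix.fromBlocks P Q Qᵀ R)ᵀ = Matrix.fromBlocks P Q Qᵀ R)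
    (hP : IsUnit P.det)
    (B : Matrix (α ⊕ β) (α ⊕ β) (ZMod 2))
    (hB : B = Matrix.fromBlocks P⁻¹ (P⁻¹ * Q) (Qᵀ * P⁻¹) (R - Qᵀ * P⁻¹ * Q))
    (X : Finset (α ⊕ β)) (hX : X = Finset.univ.image Sum.inl) :
    ∀ S : Finset (α ⊕ β),
      IsUnit (B.submatrix (Subtype.val : ↥S → α ⊕ β) (Subtype.val : ↥S → α ⊕ β)).det ↔
        IsUnit (((Matrix.fromBlocks P Q Qᵀ R).submatrix
          (Subtype.val : ↥(symmDiff S X) → α ⊕ β)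
          (Subtype.val : ↥(symmDiff S X) → α ⊕ β)).det) := by
  intro S
  have hPP : P⁻¹ * P = 1 := Matrix.nonsing_inv_mul P hP
  have hPP' : P * P⁻¹ = 1 := Matrix.mul_nonsing_inv P hP
  -- membership facts for the symmetric difference
  have hmemL : ∀ a : α, Sum.inl a ∈ symmDiff S X ↔ Sum.inl a ∉ S := by
    intro a; subst hX; simp [Finset.mem_symmDiff]
  have hmemR : ∀ b : β, Sum.inr b ∈ symmDiff S X ↔ Sum.inr b ∈ S := by
    intro b; subst hX; simp [Finset.mem_symmDiff]
  -- key computation: the PPT exchanges x and u := P x + Q y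
  have keyB : ∀ (x : α → ZMod 2) (y : β → ZMod 2),
      B.mulVec (Sum.elim (P *ᵥ x + Q *ᵥ y) y) = Sum.elim x (Qᵀ *ᵥ x + R *ᵥ y) := by
    intro x y
    subst hB
    rw [Matrix.fromBlocks_mulVec]
    have h1 : (Sum.elim (P *ᵥ x + Q *ᵥ y) y) ∘ Sum.inl = P *ᵥ x + Q *ᵥ y := rfl
    have h2 : (Sum.elim (P *ᵥ x + Q *ᵥ y) y) ∘ Sum.inr = y := rfl
    rw [h1, h2]
    have c1 : P⁻¹ *ᵥ (P *ᵥ x + Q *ᵥ y) + (P⁻¹ * Q) *ᵥ y = x := by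
      rw [mulVec_add, mulVec_mulVec, mulVec_mulVec, hPP, one_mulVec, add_assoc,
        zmod2_vec_add_self, add_zero]
    have c2 : (Qᵀ * P⁻¹) *ᵥ (P *ᵥ x + Q *ᵥ y) + (R - Qᵀ * P⁻¹ * Q) *ᵥ y
        = Qᵀ *ᵥ x + R *ᵥ y := by
      rw [mulVec_add, mulVec_mulVec, mulVec_mulVec, sub_mulVec,
        show Qᵀ * P⁻¹ * P = Qᵀ from by rw [Matrix.mul_assoc, hPP, Matrix.mul_one]]
      abel
    rw [c1, c2]
  -- surjectivity of (x, y) ↦ (P x + Q y, y)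
  have hsur : ∀ (u : α → ZMod 2) (y : β → ZMod 2), ∃ x, P *ᵥ x + Q *ᵥ y = u := by
    intro u y
    refine ⟨P⁻¹ *ᵥ u + P⁻¹ *ᵥ (Q *ᵥ y), ?_⟩
    rw [mulVec_add, mulVec_mulVec, mulVec_mulVec, hPP', one_mulVec, one_mulVec]
    calc u + Q *ᵥ y + Q *ᵥ y = u + (Q *ᵥ y + Q *ᵥ y) := by abel
      _ = u := by rw [zmod2_vec_add_self]; abel
  have hAmul : ∀ (x : α → ZMod 2) (y : β → ZMod 2),
      (Matrix.fromBlocks P Q Qᵀ R).mulVec (Sum.elim x y)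
        = Sum.elim (P *ᵥ x + Q *ᵥ y) (Qᵀ *ᵥ x + R *ᵥ y) := by
    intro x y
    rw [Matrix.fromBlocks_mulVec]
    rfl
  have hPinj : ∀ x : α → ZMod 2, P *ᵥ x = 0 → x = 0 := by
    intro x hx
    have : P⁻¹ *ᵥ (P *ᵥ x) = P⁻¹ *ᵥ 0 := by rw [hx]
    rwa [mulVec_mulVec, hPP, one_mulVec, mulVec_zero] at this
  rw [← not_iff_not, notUnit_iff_exists, notUnit_iff_exists]
  constructor
  · rintro ⟨v, hv, hsupp, hker⟩
    obtain ⟨x, hx⟩ := hsur (v ∘ Sum.inl) (v ∘ Sum.inr)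
    have hv' : v = Sum.elim (v ∘ Sum.inl) (v ∘ Sum.inr) := by
      funext i; cases i <;> rfl
    have hkey := keyB x (v ∘ Sum.inr)
    rw [hx, ← hv'] at hkey
    refine ⟨Sum.elim x (v ∘ Sum.inr), ?_, ?_, ?_⟩
    · intro h0
      apply hv
      have hx0 : x = 0 := funext fun a => congrFun h0 (Sum.inl a)
      have hy0 : v ∘ Sum.inr = 0 := funext fun b => congrFun h0 (Sum.inr b)
      have hu0 : v ∘ Sum.inl = 0 := by
        rw [← hx, hx0, hy0, mulVec_zero, mulVec_zero, add_zero]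
      rw [hv', hu0, hy0]
      funext i; cases i <;> rfl
    · intro i hi
      cases i with
      | inl a =>
        have : Sum.inl a ∈ S := by
          by_contra h; exact hi ((hmemL a).mpr h)
        have := hker _ this
        rw [hkey] at this
        exact this
      | inr b =>
        have : Sum.inr b ∉ S := fun h => hi ((hmemR b).mpr h)
        exact hsupp _ this
    · intro i hi
      rw [hAmul, hx]
      cases i with
      | inl a =>
        exact hsupp _ ((hmemL a).mp hi)
      | inr b =>
        have := hker _ ((hmemR b).mp hi)
        rw [hkey] at this
        exact this
  · rintro ⟨v, hv, hsupp, hker⟩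
    have hv' : v = Sum.elim (v ∘ Sum.inl) (v ∘ Sum.inr) := by
      funext i; cases i <;> rfl
    set x := v ∘ Sum.inl with hxdef
    set y := v ∘ Sum.inr with hydef
    have hkey := keyB x y
    have hAv : (Matrix.fromBlocks P Q Qᵀ R).mulVec v
        = Sum.elim (P *ᵥ x + Q *ᵥ y) (Qᵀ *ᵥ x + R *ᵥ y) := by
      rw [hv', hAmul]
    refine ⟨Sum.elim (P *ᵥ x + Q *ᵥ y) y, ?_, ?_, ?_⟩
    · intro h0
      apply hv
      have hy0 : y = 0 := funext fun b => congrFun h0 (Sum.inr b)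
      have hu0 : P *ᵥ x + Q *ᵥ y = 0 := funext fun a => congrFun h0 (Sum.inl a)
      have hx0 : x = 0 := by
        apply hPinj
        rw [hy0, mulVec_zero, add_zero] at hu0
        exact hu0
      rw [hv', hx0, hy0]
      funext i; cases i <;> rfl
    · intro i hi
      cases i with
      | inl a =>
        have h1 : Sum.inl a ∈ symmDiff S X := (hmemL a).mpr hi
        have := hker _ h1
        rw [hAv] at this
        exact this
      | inr b =>
        have : Sum.inr b ∉ symmDiff S X := fun h => hi ((hmemR b).mp h)
        exact hsupp _ this
    · intro i hi
      rw [hkey]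
      cases i with
      | inl a =>
        have : Sum.inl a ∉ symmDiff S X := by
          rw [hmemL]; simp [hi]
        exact hsupp _ this
      | inr b =>
        have := hker _ ((hmemR b).mpr hi)
        rw [hAv] at this
        exact this
end

section
/- Let K be a field, let α and β be finite types with decidable equality, and let A = Matrix.fromBlocks P Q R S : Matrix (α ⊕ β) (α ⊕ β) K be invertible (IsUnit A.det). Then P is invertible (IsUnit P.det) if and only if the lower-right block (A⁻¹).toBlocks₂₂ of the inverse is invertible. (A principal submatrix of an invertible matrix on a set X of indices is invertible if and only if the principal submatrix of the inverse on the complement of X is invertible.) -/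
/-!
Write `B = A⁻¹`. Replacing the `α`-columns of `B` by those of the identity gives a matrix
`fromBlocks 1 B₁₂ 0 B₂₂` whose product with `A` is the block lower triangular matrix
`fromBlocks A₁₁ 0 A₂₁ 1`. Taking determinants, `det A * det B₂₂ = det A₁₁`, and `det A` is a unit.
-/

open Matrix

namespace Matrix

variable {R : Type*} [CommRing R] {α β : Type*} [Fintype α] [DecidableEq α]
  [Fintype β] [DecidableEq β]

theorem mul_fromBlocks_one_toBlocks_inv (A : Matrix (α ⊕ β) (α ⊕ β) R) (hA : IsUnit A.det) :
    A * fromBlocks 1 A⁻¹.toBlocks₁₂ 0 A⁻¹.toBlocks₂₂ = fromBlocks A.toBlocks₁₁ 0 A.toBlocks₂₁ 1 := by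
  have hinv := congrFun₂ (A.mul_nonsing_inv hA)
  ext i (j | j)
  · cases i <;> simp [mul_apply, Fintype.sum_sum_type, one_apply, toBlocks₁₁, toBlocks₂₁]
  · have := hinv i (Sum.inr j)
    cases i <;> simpa [mul_apply, Fintype.sum_sum_type, one_apply, toBlocks₁₂, toBlocks₂₂] using this

theorem det_mul_det_toBlocks₂₂_inv (A : Matrix (α ⊕ β) (α ⊕ β) R) (hA : IsUnit A.det) :
    A.det * A⁻¹.toBlocks₂₂.det = A.toBlocks₁₁.det := by
  simpa [det_fromBlocks_zero₂₁, det_fromBlocks_zero₁₂] using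
    congrArg det (mul_fromBlocks_one_toBlocks_inv A hA)

theorem isUnit_det_toBlocks₁₁_iff (A : Matrix (α ⊕ β) (α ⊕ β) R) (hA : IsUnit A.det) :
    IsUnit A.toBlocks₁₁.det ↔ IsUnit A⁻¹.toBlocks₂₂.det := by
  rw [← det_mul_det_toBlocks₂₂_inv A hA, IsUnit.mul_iff, and_iff_right hA]

end Matrix

/-- a principal block of an invertible matrix is invertible iff the
complementary principal block of the inverse is invertible. -/
theorem stmt_16 {K : Type*} [Field K] {α β : Type*} [Fintype α] [DecidableEq α]
    [Fintype β] [DecidableEq β]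
    (P : Matrix α α K) (Q : Matrix α β K) (R : Matrix β α K) (S : Matrix β β K)
    (hA : IsUnit (Matrix.fromBlocks P Q R S).det) :
    IsUnit P.det ↔ IsUnit ((Matrix.fromBlocks P Q R S)⁻¹.toBlocks₂₂).det := by
  simpa using isUnit_det_toBlocks₁₁_iff (fromBlocks P Q R S) hA
end

section
/- Let α and β be finite types with decidable equality and let A = Matrix.fromBlocks P Q Qᵀ S : Matrix (α ⊕ β) (α ⊕ β) (ZMod 2) be symmetric and invertible (IsUnit A.det). Then there exists M : Matrix α β (ZMod 2) with Q = P * M if and only if there exists N : Matrix β α (ZMod 2) with (A⁻¹).toBlocks₂₁ = (A⁻¹).toBlocks₂₂ * N. (A vertex set W is reducible in a nonsingular graph G if and only if its complement is reducible in the retrograph G^R, whose adjacency matrix is A⁻¹.) -/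
open Matrix

private lemma addself_stmt18 {ι κ : Type*} (X : Matrix ι κ (ZMod 2)) : X + X = 0 := by
  ext i j
  exact CharTwo.add_self_eq_zero _

private lemma eq_of_add_eq_zero_stmt18 {ι κ : Type*} (X Y : Matrix ι κ (ZMod 2))
    (h : X + Y = 0) : X = Y := by
  calc X = X + (Y + Y) := by rw [addself_stmt18, add_zero]
    _ = (X + Y) + Y := by rw [add_assoc]
    _ = Y := by rw [h, zero_add]

/-- a vertex set is reducible in a nonsingular graph iff its complement is
reducible in the retrograph (whose adjacency matrix is the inverse). -/
theorem stmt_18 {α β : Type*} [Fintype α] [DecidableEq α] [Fintype β] [DecidableEq β]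
    (P : Matrix α α (ZMod 2)) (Q : Matrix α β (ZMod 2)) (S : Matrix β β (ZMod 2))
    (hA : (Matrix.fromBlocks P Q Qᵀ S)ᵀ = Matrix.fromBlocks P Q Qᵀ S)
    (hdet : IsUnit (Matrix.fromBlocks P Q Qᵀ S).det) :
    (∃ M : Matrix α β (ZMod 2), Q = P * M) ↔
      (∃ N : Matrix β α (ZMod 2),
        (Matrix.fromBlocks P Q Qᵀ S)⁻¹.toBlocks₂₁ =
          (Matrix.fromBlocks P Q Qᵀ S)⁻¹.toBlocks₂₂ * N) := by
  set A := Matrix.fromBlocks P Q Qᵀ S with hAdef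
  set B11 := A⁻¹.toBlocks₁₁ with hB11
  set B12 := A⁻¹.toBlocks₁₂ with hB12
  set B21 := A⁻¹.toBlocks₂₁ with hB21
  set B22 := A⁻¹.toBlocks₂₂ with hB22
  have hB : Matrix.fromBlocks B11 B12 B21 B22 = A⁻¹ := Matrix.fromBlocks_toBlocks _
  have hBA : A⁻¹ * A = 1 := Matrix.nonsing_inv_mul A hdet
  have hAB : A * A⁻¹ = 1 := Matrix.mul_nonsing_inv A hdet
  rw [← hB] at hBA hAB
  rw [hAdef, Matrix.fromBlocks_multiply, ← Matrix.fromBlocks_one] at hBA hAB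
  have e1 : B21 * P + B22 * Qᵀ = 0 := by
    have := congrArg Matrix.toBlocks₂₁ hBA
    simpa only [Matrix.toBlocks_fromBlocks₂₁] using this
  have e2 : B21 * Q + B22 * S = 1 := by
    have := congrArg Matrix.toBlocks₂₂ hBA
    simpa only [Matrix.toBlocks_fromBlocks₂₂] using this
  have f1 : P * B11 + Q * B21 = 1 := by
    have := congrArg Matrix.toBlocks₁₁ hAB
    simpa only [Matrix.toBlocks_fromBlocks₁₁] using this
  have f2 : P * B12 + Q * B22 = 0 := by
    have := congrArg Matrix.toBlocks₁₂ hAB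
    simpa only [Matrix.toBlocks_fromBlocks₁₂] using this
  constructor
  · rintro ⟨M, hM⟩
    have step1 : B21 * (P * M) = B22 * (Qᵀ * M) := by
      apply eq_of_add_eq_zero_stmt18
      calc B21 * (P * M) + B22 * (Qᵀ * M)
          = (B21 * P + B22 * Qᵀ) * M := by
            rw [Matrix.add_mul, Matrix.mul_assoc, Matrix.mul_assoc]
        _ = 0 := by rw [e1, Matrix.zero_mul]
    have key : B22 * (Qᵀ * M + S) = 1 := by
      calc B22 * (Qᵀ * M + S)
          = B22 * (Qᵀ * M) + B22 * S := by rw [Matrix.mul_add]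
        _ = B21 * (P * M) + B22 * S := by rw [step1]
        _ = B21 * Q + B22 * S := by rw [← hM]
        _ = 1 := e2
    exact ⟨(Qᵀ * M + S) * B21, by rw [← Matrix.mul_assoc, key, Matrix.one_mul]⟩
  · rintro ⟨N, hN⟩
    have step1 : P * (B12 * N) = Q * (B22 * N) := by
      apply eq_of_add_eq_zero_stmt18
      calc P * (B12 * N) + Q * (B22 * N)
          = (P * B12 + Q * B22) * N := by
            rw [Matrix.add_mul, Matrix.mul_assoc, Matrix.mul_assoc]
        _ = 0 := by rw [f2, Matrix.zero_mul]
    have key : P * (B11 + B12 * N) = 1 := by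
      calc P * (B11 + B12 * N)
          = P * B11 + P * (B12 * N) := by rw [Matrix.mul_add]
        _ = P * B11 + Q * (B22 * N) := by rw [step1]
        _ = P * B11 + Q * B21 := by rw [← hN]
        _ = 1 := f1
    exact ⟨(B11 + B12 * N) * Q, by rw [← Matrix.mul_assoc, key, Matrix.one_mul]⟩
end

section
/- Let α and β be finite types with decidable equality and let A = Matrix.fromBlocks P Q Qᵀ R : Matrix (α ⊕ β) (α ⊕ β) (ZMod 2) be symmetric and invertible (IsUnit A.det). If there exists M : Matrix α β (ZMod 2) with Q = P * M, then P is invertible (IsUnit P.det). (In a nonsingular graph, every reducible vertex set is nonsingular; equivalently, no successful reduction of a nonsingular graph ever uses the negative rule.) -/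
open Matrix

/-- in a nonsingular graph, every reducible vertex set is nonsingular. -/
theorem stmt_19 {α β : Type*} [Fintype α] [DecidableEq α] [Fintype β] [DecidableEq β]
    (P : Matrix α α (ZMod 2)) (Q : Matrix α β (ZMod 2)) (R : Matrix β β (ZMod 2))
    (hA : (Matrix.fromBlocks P Q Qᵀ R)ᵀ = Matrix.fromBlocks P Q Qᵀ R)
    (hdet : IsUnit (Matrix.fromBlocks P Q Qᵀ R).det)
    (h : ∃ M : Matrix α β (ZMod 2), Q = P * M) :
    IsUnit P.det := by
  obtain ⟨M, hM⟩ := h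
  have hPsym : Pᵀ = P := by
    have := congrArg Matrix.toBlocks₁₁ hA
    simpa [Matrix.fromBlocks_transpose, Matrix.toBlocks_fromBlocks₁₁] using this
  by_contra hP
  have hdetP : P.det = 0 := by
    by_contra h0
    exact hP (isUnit_iff_ne_zero.mpr h0)
  obtain ⟨v, hv, hPv⟩ := (Matrix.exists_mulVec_eq_zero_iff).mpr hdetP
  have hQTv : Qᵀ *ᵥ v = 0 := by
    have : Qᵀ = Mᵀ * P := by
      rw [hM, Matrix.transpose_mul, hPsym]
    rw [this, ← Matrix.mulVec_mulVec, hPv, Matrix.mulVec_zero]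
  have hAv : (Matrix.fromBlocks P Q Qᵀ R) *ᵥ (Sum.elim v 0) = 0 := by
    rw [Matrix.fromBlocks_mulVec]
    simp [hPv, hQTv]
  have hinj : Function.Injective ((Matrix.fromBlocks P Q Qᵀ R).mulVec) :=
    Matrix.mulVec_injective_iff_isUnit.2 ((Matrix.isUnit_iff_isUnit_det _).mpr hdet)
  have : Sum.elim v (0 : β → ZMod 2) = 0 := by
    apply hinj
    simpa using hAv
  exact hv (funext fun a => congrFun this (Sum.inl a))
end
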